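/- arXiv:0806.1514 — 6 statements merged into one kernel-verified Lean document; each statement's English description precedes it below -/
import Mathlib

section
/- For every positive integer n, the number 1 + 2^(2^n) + 2^(2^(n+1)) is divisible by 21. -/
/-!
Write `x = 2 ^ 2 ^ n`, so that the number is `1 + x + x ^ 2` and the next one is
`1 + x ^ 2 + x ^ 4 = (1 + x + x ^ 2) * (1 - x + x ^ 2)`. Hence each term of the sequence divides
the next, and the term for `n = 1` is `1 + 4 + 16 = 21`.
-/

theorem one_add_add_sq_dvd_one_add_sq_add_pow_four {R : Type*} [CommRing R] (a : R) :
    1 + a + a ^ 2 ∣ 1 + a ^ 2 + a ^ 4 :=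
  ⟨1 - a + a ^ 2, by ring⟩

theorem Nat.one_add_add_sq_dvd_one_add_sq_add_pow_four (a : ℕ) :
    1 + a + a ^ 2 ∣ 1 + a ^ 2 + a ^ 4 := by
  exact_mod_cast _root_.one_add_add_sq_dvd_one_add_sq_add_pow_four (a : ℤ)

theorem stmt_0 (n : ℕ) (hn : 0 < n) :
    21 ∣ 1 + 2 ^ (2 ^ n) + 2 ^ (2 ^ (n + 1)) := by
  induction n, hn using Nat.le_induction with
  | base => norm_num
  | succ n _ ih =>
    have hsq : 2 ^ 2 ^ (n + 1) = (2 ^ 2 ^ n) ^ 2 := by rw [pow_succ, pow_mul]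
    have hfour : 2 ^ 2 ^ (n + 1 + 1) = (2 ^ 2 ^ n) ^ 4 := by
      rw [pow_succ, pow_mul, hsq, ← pow_mul]
    rw [hsq] at ih
    rw [hsq, hfour]
    exact ih.trans (Nat.one_add_add_sq_dvd_one_add_sq_add_pow_four _)
end

section
/- For every integer n ≥ 2, the number (1 + 2^(2^n) + 2^(2^(n+1)))/3 is a composite integer divisible by 7. -/
/-! With `k = 2 ^ n` the number in question is `(1 + 2 ^ k + 4 ^ k) / 3`. Since `k` is even,
`2 ^ k ≡ 4 ^ k ≡ 1 [MOD 3]`; since `3 ∤ k` and `2` has order `3` modulo `7`, the residues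
`2 ^ k, 4 ^ k` are `2, 4` in some order, so `1 + 2 ^ k + 4 ^ k ≡ 0 [MOD 7]`. Hence the quotient by
`3` is a multiple of `7`, and for `n ≥ 2` it exceeds `7`. -/

theorem three_dvd_one_add_two_pow_add_four_pow {k : ℕ} (hk : Even k) :
    3 ∣ 1 + 2 ^ k + 4 ^ k := by
  rw [← ZMod.natCast_eq_zero_iff]
  push_cast
  rw [show (2 : ZMod 3) = -1 from rfl, show (4 : ZMod 3) = 1 from rfl, hk.neg_one_pow, one_pow]
  rfl

theorem seven_dvd_one_add_two_pow_add_four_pow {k : ℕ} (hk : ¬ 3 ∣ k) :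
    7 ∣ 1 + 2 ^ k + 4 ^ k := by
  rw [← ZMod.natCast_eq_zero_iff]
  push_cast
  rw [pow_eq_pow_mod k (show (2 : ZMod 7) ^ 3 = 1 from rfl),
    pow_eq_pow_mod k (show (4 : ZMod 7) ^ 3 = 1 from rfl)]
  have hk3 : k % 3 = 1 ∨ k % 3 = 2 := by omega
  rcases hk3 with h | h <;> rw [h] <;> rfl

theorem twentyone_dvd_one_add_two_pow_add_four_pow {k : ℕ} (hk₂ : Even k) (hk₃ : ¬ 3 ∣ k) :
    21 ∣ 1 + 2 ^ k + 4 ^ k :=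
  Nat.Coprime.mul_dvd_of_dvd_of_dvd (by norm_num)
    (three_dvd_one_add_two_pow_add_four_pow hk₂) (seven_dvd_one_add_two_pow_add_four_pow hk₃)

theorem two_pow_two_pow_succ (n : ℕ) : 2 ^ 2 ^ (n + 1) = 4 ^ 2 ^ n := by
  rw [pow_succ', pow_mul]
  norm_num

theorem stmt_1 (n : ℕ) (hn : 2 ≤ n) :
    7 ∣ (1 + 2 ^ (2 ^ n) + 2 ^ (2 ^ (n + 1))) / 3 ∧
    1 < (1 + 2 ^ (2 ^ n) + 2 ^ (2 ^ (n + 1))) / 3 ∧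
    ¬ Nat.Prime ((1 + 2 ^ (2 ^ n) + 2 ^ (2 ^ (n + 1))) / 3) := by
  rw [two_pow_two_pow_succ]
  have h_even : Even (2 ^ n) := (Nat.even_pow' (by omega)).mpr even_two
  have h_not_three : ¬ 3 ∣ 2 ^ n := fun h =>
    absurd (Nat.prime_three.dvd_of_dvd_pow h) (by norm_num)
  have h_seven : 7 ∣ (1 + 2 ^ 2 ^ n + 4 ^ 2 ^ n) / 3 :=
    Nat.dvd_div_of_mul_dvd (twentyone_dvd_one_add_two_pow_add_four_pow h_even h_not_three)
  have h_large : 7 < (1 + 2 ^ 2 ^ n + 4 ^ 2 ^ n) / 3 := by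
    have h_four : 4 ^ 2 ^ 2 ≤ 4 ^ 2 ^ n :=
      Nat.pow_le_pow_right (by norm_num) (Nat.pow_le_pow_right (by norm_num) hn)
    exact (Nat.le_div_iff_mul_le (by norm_num)).mpr
      (le_trans (by norm_num) (h_four.trans (Nat.le_add_left _ _)))
  exact ⟨h_seven, by omega, Nat.not_prime_of_dvd_of_lt h_seven (by norm_num) h_large⟩
end

section
/- Let N ≥ 3 be odd, s = ord_N(2), n with 2^n ≡ 1 (mod s), a = ord_s(2), l the largest integer with 2^l < s, and b the residue of 2^(l+1) modulo s with 0 ≤ b < s. Set k_l = 1 + 2^(2^0) + 2^(2^1) + ... + 2^(2^l) and k_b = 2^b + 2^(b·2) + 2^(b·2^2) + ... + 2^(b·2^(a−1)). Then for every i ≥ 0, 1 + 2^(2^n) + 2^(2^(n+1)) + ... + 2^(2^(n+l+i·a)) ≡ k_l + i·k_b (mod N). -/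
/-! Since `2 ^ s = 1` in `ZMod N`, a power `2 ^ e` there only depends on `e` modulo `s`, and
modulo `s` we have `2 ^ n ≡ 1`, `2 ^ a ≡ 1` and `2 ^ (l + 1) ≡ b`. So the exponents `2 ^ (n + j)`
for `j ≤ l` reduce to `2 ^ j`, giving `k_l`, and each further block of `a` consecutive exponents
`2 ^ (n + l + 1 + i a + t)`, `t < a`, reduces to `b 2 ^ t`, contributing one copy of `k_b`. -/

open Finset

theorem Nat.pow_orderOf_cast_modEq_one (m s : ℕ) : m ^ orderOf (m : ZMod s) ≡ 1 [MOD s] := by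
  rw [← ZMod.natCast_eq_natCast_iff]
  push_cast
  exact pow_orderOf_eq_one _

section

variable {s n a l b : ℕ}

theorem Nat.two_pow_add_modEq (hn : 2 ^ n ≡ 1 [MOD s]) (j : ℕ) : 2 ^ (n + j) ≡ 2 ^ j [MOD s] := by
  simpa [pow_add] using hn.mul_right (2 ^ j)

theorem Nat.two_pow_block_modEq (hn : 2 ^ n ≡ 1 [MOD s]) (ha : 2 ^ a ≡ 1 [MOD s])
    (hb : 2 ^ (l + 1) ≡ b [MOD s]) (i t : ℕ) :
    2 ^ (n + (l + i * a + 1 + t)) ≡ b * 2 ^ t [MOD s] := by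
  refine (Nat.two_pow_add_modEq hn _).trans ?_
  calc 2 ^ (l + i * a + 1 + t) = (2 ^ a) ^ i * 2 ^ (l + 1) * 2 ^ t := by ring
    _ ≡ 1 ^ i * b * 2 ^ t [MOD s] := ((ha.pow i).mul hb).mul_right _
    _ = b * 2 ^ t := by ring

theorem one_add_sum_pow_two_pow_eq {R : Type*} [CommSemiring R] {g : R}
    (hn : 2 ^ n ≡ 1 [MOD orderOf g]) (ha : 2 ^ a ≡ 1 [MOD orderOf g])
    (hb : 2 ^ (l + 1) ≡ b [MOD orderOf g]) (i : ℕ) :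
    1 + ∑ j ∈ range (l + i * a + 1), g ^ 2 ^ (n + j) =
      1 + ∑ j ∈ range (l + 1), g ^ 2 ^ j + i * ∑ j ∈ range a, g ^ (b * 2 ^ j) := by
  induction i with
  | zero =>
    simp only [zero_mul, add_zero, Nat.cast_zero]
    congr 1
    exact sum_congr rfl fun j _ ↦
      pow_eq_pow_of_modEq (Nat.two_pow_add_modEq hn j) (pow_orderOf_eq_one g)
  | succ i ih =>
    have hblock : ∀ t ∈ range a, g ^ 2 ^ (n + (l + i * a + 1 + t)) = g ^ (b * 2 ^ t) :=
      fun t _ ↦ pow_eq_pow_of_modEq (Nat.two_pow_block_modEq hn ha hb i t)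
        (pow_orderOf_eq_one g)
    rw [show l + (i + 1) * a + 1 = l + i * a + 1 + a by ring, sum_range_add, ← add_assoc, ih,
      sum_congr rfl hblock]
    push_cast
    ring

end

theorem stmt_5_general (N : ℕ)
    (s : ℕ) (hs : s = orderOf (2 : ZMod N))
    (n : ℕ) (h : 2 ^ n ≡ 1 [MOD s])
    (a : ℕ) (ha : a = orderOf (2 : ZMod s))
    (l : ℕ)
    (b : ℕ) (hb : b = 2 ^ (l + 1) % s)
    (kl kb : ℕ)
    (hkl : kl = 1 + ∑ j ∈ Finset.range (l + 1), 2 ^ (2 ^ j))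
    (hkb : kb = ∑ j ∈ Finset.range a, 2 ^ (b * 2 ^ j)) :
    ∀ i : ℕ,
      1 + ∑ j ∈ Finset.range (l + i * a + 1), 2 ^ (2 ^ (n + j)) ≡
        kl + i * kb [MOD N] := by
  intro i
  subst hs ha hb hkl hkb
  rw [← ZMod.natCast_eq_natCast_iff]
  push_cast
  exact one_add_sum_pow_two_pow_eq h (by simpa using Nat.pow_orderOf_cast_modEq_one 2 _)
    (Nat.mod_modEq _ _).symm i

theorem stmt_5 (N : ℕ) (hN3 : 3 ≤ N) (hNodd : Odd N)
    (s : ℕ) (hs : s = orderOf (2 : ZMod N))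
    (n : ℕ) (hn : 0 < n) (h : 2 ^ n ≡ 1 [MOD s])
    (a : ℕ) (ha : a = orderOf (2 : ZMod s))
    (l : ℕ) (hl : 2 ^ l < s) (hl' : s ≤ 2 ^ (l + 1))
    (b : ℕ) (hb : b = 2 ^ (l + 1) % s)
    (kl kb : ℕ)
    (hkl : kl = 1 + ∑ j ∈ Finset.range (l + 1), 2 ^ (2 ^ j))
    (hkb : kb = ∑ j ∈ Finset.range a, 2 ^ (b * 2 ^ j)) :
    ∀ i : ℕ,
      1 + ∑ j ∈ Finset.range (l + i * a + 1), 2 ^ (2 ^ (n + j)) ≡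
        kl + i * kb [MOD N] :=
  stmt_5_general N s hs n h a ha l b hb kl kb hkl hkb
end

section
/- Let N ≥ 3 be odd, s = ord_N(2), n ≥ 2 with 2^n ≡ 1 (mod s), a = ord_s(2), l the largest integer with 2^l < s, b ≡ 2^(l+1) (mod s) with 0 ≤ b < s, k_l = 1 + Σ_{j=0}^{l} 2^(2^j), and k_b = Σ_{j=0}^{a−1} 2^(b·2^j). If d = gcd(k_b, N) divides k_l, then there exist infinitely many positive integers m such that N divides 1 + 2^(2^n) + 2^(2^(n+1)) + ... + 2^(2^(n+m)). -/
/-!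
Since `2 ^ n ≡ 1` and `2 ^ a ≡ 1` modulo `s = ord_N 2`, the residue of `2 ^ 2 ^ j` modulo `N`
is unchanged when `j` is shifted by `n` or by `a`. Hence for `m = l + w * a` the sum
`1 + ∑_{j ≤ m} 2 ^ 2 ^ (n + j)` is `k_l + w * k_b` modulo `N`, the `w` full periods after the
first `l + 1` terms each contributing `k_b`. As `gcd(k_b, N) ∣ k_l`, the linear congruence
`k_l + w * k_b ≡ 0 (mod N)` has a solution `w₀`, and then every `w ≡ w₀ (mod N)` works.
-/

open Finset

theorem pow_eq_pow_of_modEq_orderOf {M : Type*} [Monoid M] {x : M} {m n : ℕ}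
    (h : m ≡ n [MOD orderOf x]) : x ^ m = x ^ n := by
  rw [← pow_mod_orderOf x m, ← pow_mod_orderOf x n, h]

theorem Function.Periodic.sum_range_mul {M : Type*} [AddCommMonoid M] {f : ℕ → M} {a : ℕ}
    (hf : Function.Periodic f a) (w : ℕ) :
    ∑ i ∈ range (w * a), f i = w • ∑ i ∈ range a, f i := by
  induction w with
  | zero => simp
  | succ w ih =>
    rw [add_mul, one_mul, sum_range_add, ih, succ_nsmul]
    congr 1
    exact sum_congr rfl fun i _ => by rw [add_comm]; exact hf.nsmul w i

theorem periodic_pow_pow {M : Type*} [Monoid M] {x : M} {q p : ℕ}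
    (h : q ^ p ≡ 1 [MOD orderOf x]) : Function.Periodic (fun j => x ^ q ^ j) p := fun j =>
  pow_eq_pow_of_modEq_orderOf (by simpa [pow_add] using h.mul_left (q ^ j))

theorem pow_orderOf_natCast_modEq_one (q s : ℕ) : q ^ orderOf (q : ZMod s) ≡ 1 [MOD s] := by
  rw [← ZMod.natCast_eq_natCast_iff]
  push_cast
  exact pow_orderOf_eq_one _

theorem orderOf_natCast_pos {q s n : ℕ} (hn : 0 < n) (h : q ^ n ≡ 1 [MOD s]) :
    0 < orderOf (q : ZMod s) := by
  refine orderOf_pos_iff.2 (isOfFinOrder_iff_pow_eq_one.2 ⟨n, hn, ?_⟩)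
  exact_mod_cast (ZMod.natCast_eq_natCast_iff _ _ _).2 h

theorem ZMod.exists_add_natCast_mul_eq_zero {N : ℕ} [NeZero N] {u v : ℕ}
    (h : Nat.gcd v N ∣ u) : ∃ w : ℕ, (u : ZMod N) + w * v = 0 := by
  obtain ⟨c, rfl⟩ := h
  have hbezout : (Nat.gcd v N : ZMod N) = v * Nat.gcdA v N := by
    simpa using congrArg (Int.cast : ℤ → ZMod N) (Nat.gcd_eq_gcd_ab v N)
  refine ⟨(-(c * Nat.gcdA v N : ZMod N)).val, ?_⟩
  rw [ZMod.natCast_zmod_val]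
  push_cast
  rw [hbezout]
  ring

theorem sum_range_pow_pow_add {R : Type*} [Semiring R] (x : R) {q n a : ℕ}
    (hn : q ^ n ≡ 1 [MOD orderOf x]) (ha : q ^ a ≡ 1 [MOD orderOf x]) (l w : ℕ) :
    ∑ j ∈ range (l + w * a + 1), x ^ q ^ (n + j) =
      ∑ j ∈ range (l + 1), x ^ q ^ j +
        w • ∑ j ∈ range a, x ^ (q ^ (l + 1) % orderOf x * q ^ j) := by
  have hshift : ∀ j, x ^ q ^ (n + j) = x ^ q ^ j := fun j => by
    rw [add_comm]; exact periodic_pow_pow hn j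
  have htail : ∀ j, x ^ q ^ (l + 1 + j) = x ^ (q ^ (l + 1) % orderOf x * q ^ j) := fun j =>
    pow_eq_pow_of_modEq_orderOf (by rw [pow_add]; exact (Nat.mod_modEq _ _).symm.mul_right _)
  simp_rw [hshift, show l + w * a + 1 = l + 1 + w * a by ring, sum_range_add,
    ((periodic_pow_pow ha).const_add (l + 1)).sum_range_mul, htail]

theorem stmt_6_general (N : ℕ) (hN3 : 3 ≤ N)
    (s : ℕ) (hs : s = orderOf (2 : ZMod N))
    (n : ℕ) (hn : 2 ≤ n) (h : 2 ^ n ≡ 1 [MOD s])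
    (a : ℕ) (ha : a = orderOf (2 : ZMod s))
    (l : ℕ)
    (b : ℕ) (hb : b = 2 ^ (l + 1) % s)
    (kl kb : ℕ)
    (hkl : kl = 1 + ∑ j ∈ Finset.range (l + 1), 2 ^ (2 ^ j))
    (hkb : kb = ∑ j ∈ Finset.range a, 2 ^ (b * 2 ^ j))
    (hd : Nat.gcd kb N ∣ kl) :
    {m : ℕ | 0 < m ∧ N ∣ 1 + ∑ j ∈ Finset.range (m + 1), 2 ^ (2 ^ (n + j))}.Infinite := by
  have : NeZero N := ⟨by omega⟩
  have ha0 : 0 < a := ha ▸ orderOf_natCast_pos (by omega) h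
  have h2a : 2 ^ a ≡ 1 [MOD s] := ha ▸ pow_orderOf_natCast_modEq_one 2 s
  subst hs hb
  have hsum : ∀ w : ℕ, ((1 + ∑ j ∈ range (l + w * a + 1), 2 ^ 2 ^ (n + j) : ℕ) : ZMod N) =
      kl + w * kb := fun w => by
    push_cast
    rw [sum_range_pow_pow_add (2 : ZMod N) h h2a, hkl, hkb, nsmul_eq_mul]
    push_cast
    ring
  obtain ⟨w₀, hw₀⟩ := ZMod.exists_add_natCast_mul_eq_zero hd
  refine Set.infinite_of_forall_exists_gt fun c => ⟨l + (w₀ + (c + 1) * N) * a, ⟨?_, ?_⟩, ?_⟩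
  · positivity
  · rw [← ZMod.natCast_eq_zero_iff, hsum]
    simpa using hw₀
  · have : 1 ≤ N * a := Nat.mul_pos (by omega) ha0
    nlinarith

theorem stmt_6 (N : ℕ) (hN3 : 3 ≤ N) (hNodd : Odd N)
    (s : ℕ) (hs : s = orderOf (2 : ZMod N))
    (n : ℕ) (hn : 2 ≤ n) (h : 2 ^ n ≡ 1 [MOD s])
    (a : ℕ) (ha : a = orderOf (2 : ZMod s))
    (l : ℕ) (hl : 2 ^ l < s) (hl' : s ≤ 2 ^ (l + 1))
    (b : ℕ) (hb : b = 2 ^ (l + 1) % s)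
    (kl kb : ℕ)
    (hkl : kl = 1 + ∑ j ∈ Finset.range (l + 1), 2 ^ (2 ^ j))
    (hkb : kb = ∑ j ∈ Finset.range a, 2 ^ (b * 2 ^ j))
    (hd : Nat.gcd kb N ∣ kl) :
    {m : ℕ | 0 < m ∧ N ∣ 1 + ∑ j ∈ Finset.range (m + 1), 2 ^ (2 ^ (n + j))}.Infinite :=
  stmt_6_general N hN3 s hs n hn h a ha l b hb kl kb hkl hkb hd
end

section
/- Under the hypotheses of Theorem 1 (N ≥ 3 odd, s = ord_N(2), 2^n ≡ 1 (mod s), a = ord_s(2), l maximal with 2^l < s, b ≡ 2^(l+1) mod s, k_l and k_b as defined, gcd(k_b,N) dividing k_l), if r is a positive integer with k_l + r·k_b ≡ 0 (mod N), then for every i ≥ 0, taking m = l + r·a + i·N·a, one has N divides 1 + Σ_{j=0}^{m} 2^(2^(n+j)). -/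
/-!
In `ZMod N` the power `2 ^ e` only depends on `e` modulo `s = ord_N(2)`, and `2 ^ n ≡ 1 (mod s)`,
so shifting the exponents `2 ^ (n + j)` down to `2 ^ j` does not change the sum. Its first `l + 1`
terms then give `k_l - 1`, and since `2 ^ a ≡ 1 (mod s)` the remaining terms are periodic in `j`
with period `a`; each full period sums to `k_b`, because `2 ^ (l + 1 + t) ≡ b · 2 ^ t (mod s)`.
With `m + 1 = (l + 1) + (r + iN) a` the whole sum is `k_l + (r + iN) k_b ≡ k_l + r k_b ≡ 0`.
-/

open Finset

theorem Finset.sum_range_mul_eq_nsmul_of_periodic {M : Type*} [AddCommMonoid M] {f : ℕ → M}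
    {p : ℕ} (hf : Function.Periodic f p) (q : ℕ) :
    ∑ t ∈ range (q * p), f t = q • ∑ t ∈ range p, f t := by
  induction q with
  | zero => simp
  | succ q ih =>
    rw [Nat.succ_mul, sum_range_add, ih, succ_nsmul]
    congr 1
    refine sum_congr rfl fun t _ => ?_
    rw [add_comm]
    exact_mod_cast hf.nat_mul q t

theorem Nat.pow_orderOf_zmod_modEq_one (c s : ℕ) : c ^ orderOf (c : ZMod s) ≡ 1 [MOD s] :=
  (ZMod.natCast_eq_natCast_iff _ _ _).mp <| by push_cast; exact pow_orderOf_eq_one _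

theorem periodic_pow_pow_of_pow_modEq_one {M : Type*} [Monoid M] {x : M} {s c p : ℕ}
    (hx : x ^ s = 1) (hc : c ^ p ≡ 1 [MOD s]) : Function.Periodic (fun j => x ^ c ^ j) p := by
  intro j
  refine pow_eq_pow_of_modEq ?_ hx
  calc c ^ (j + p) = c ^ p * c ^ j := by ring
    _ ≡ 1 * c ^ j [MOD s] := hc.mul_right _
    _ = c ^ j := one_mul _

theorem stmt_7_general (N : ℕ)
    (s : ℕ) (hs : s = orderOf (2 : ZMod N))
    (n : ℕ) (h : 2 ^ n ≡ 1 [MOD s])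
    (a : ℕ) (ha : a = orderOf (2 : ZMod s))
    (l : ℕ)
    (b : ℕ) (hb : b = 2 ^ (l + 1) % s)
    (kl kb : ℕ)
    (hkl : kl = 1 + ∑ j ∈ Finset.range (l + 1), 2 ^ (2 ^ j))
    (hkb : kb = ∑ j ∈ Finset.range a, 2 ^ (b * 2 ^ j))
    (r : ℕ) (hrc : N ∣ kl + r * kb) :
    ∀ i : ℕ,
      N ∣ 1 + ∑ j ∈ Finset.range (l + r * a + i * N * a + 1), 2 ^ (2 ^ (n + j)) := by
  intro i
  have hx : (2 : ZMod N) ^ s = 1 := hs ▸ pow_orderOf_eq_one _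
  have h2a : 2 ^ a ≡ 1 [MOD s] := ha ▸ Nat.pow_orderOf_zmod_modEq_one 2 s
  have hper_n := periodic_pow_pow_of_pow_modEq_one hx h
  have hper_a := (periodic_pow_pow_of_pow_modEq_one hx h2a).const_add (l + 1)
  have hperiod : ∑ t ∈ range a, (2 : ZMod N) ^ 2 ^ (l + 1 + t) = kb := by
    rw [hkb]
    push_cast
    refine sum_congr rfl fun t _ => pow_eq_pow_of_modEq ?_ hx
    rw [pow_add, hb]
    exact (Nat.mod_modEq _ s).symm.mul_right _
  have hlen : l + r * a + i * N * a + 1 = (l + 1) + (r + i * N) * a := by ring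
  rw [← ZMod.natCast_eq_zero_iff, hlen]
  push_cast
  simp_rw [add_comm n, hper_n _]
  rw [sum_range_add, sum_range_mul_eq_nsmul_of_periodic hper_a, hperiod, ← add_assoc]
  have hkl' : (kl : ZMod N) = 1 + ∑ j ∈ range (l + 1), (2 : ZMod N) ^ 2 ^ j := by
    rw [hkl]; push_cast; rfl
  rw [← hkl', nsmul_eq_mul, ← (ZMod.natCast_eq_zero_iff _ _).mpr hrc]
  push_cast
  linear_combination (i * kb : ZMod N) * ZMod.natCast_self N

theorem stmt_7 (N : ℕ) (hN3 : 3 ≤ N) (hNodd : Odd N)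
    (s : ℕ) (hs : s = orderOf (2 : ZMod N))
    (n : ℕ) (hn : 0 < n) (h : 2 ^ n ≡ 1 [MOD s])
    (a : ℕ) (ha : a = orderOf (2 : ZMod s))
    (l : ℕ) (hl : 2 ^ l < s) (hl' : s ≤ 2 ^ (l + 1))
    (b : ℕ) (hb : b = 2 ^ (l + 1) % s)
    (kl kb : ℕ)
    (hkl : kl = 1 + ∑ j ∈ Finset.range (l + 1), 2 ^ (2 ^ j))
    (hkb : kb = ∑ j ∈ Finset.range a, 2 ^ (b * 2 ^ j))
    (hd : Nat.gcd kb N ∣ kl)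
    (r : ℕ) (hr : 0 < r) (hrc : N ∣ kl + r * kb) :
    ∀ i : ℕ,
      N ∣ 1 + ∑ j ∈ Finset.range (l + r * a + i * N * a + 1), 2 ^ (2 ^ (n + j)) :=
  stmt_7_general N s hs n h a ha l b hb kl kb hkl hkb r hrc
end

section
/- For every positive integer k and every nonnegative integer i, the number 1 + 2^(2^(4k)) + 2^(2^(4k+1)) + ... + 2^(2^(4k + 94 + 124i)) is divisible by 31. -/
/-!
Since `2 ^ 5 = 32 ≡ 1 (mod 31)`, the residue of `2 ^ (2 ^ n)` modulo 31 only depends on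
`2 ^ n` modulo 5, hence on `n` modulo 4: it runs through `2, 4, 16, 8`, whose sum is `30 ≡ -1`.
In particular the offset `4 k` changes nothing, and the sum has `4 (23 + 31 i) + 3` terms,
so it is `-(23 + 31 i) + (2 + 4 + 16) ≡ -1 (mod 31)`.
-/

open Finset

theorem Function.Periodic.sum_range_mul_add {M : Type*} [AddCommMonoid M] {f : ℕ → M} {p : ℕ}
    (hf : Function.Periodic f p) (q r : ℕ) :
    ∑ j ∈ range (p * q + r), f j = q • ∑ j ∈ range p, f j + ∑ j ∈ range r, f j := by
  induction q with
  | zero => simp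
  | succ q ih =>
    have hshift : ∀ j, f (p + j) = f j := fun j => by rw [add_comm]; exact hf j
    rw [Nat.mul_succ, add_right_comm, add_comm (p * q + r), sum_range_add]
    simp only [hshift, ih, succ_nsmul']
    abel

theorem periodic_pow_pow_of_pow_eq_one {G : Type*} [Monoid G] {x : G} {d : ℕ} (hx : x ^ d = 1)
    {a p : ℕ} (ha : a ^ p ≡ 1 [MOD d]) : Function.Periodic (fun n : ℕ => x ^ a ^ n) p := by
  intro n
  dsimp only
  rw [pow_eq_pow_mod _ hx, pow_eq_pow_mod (a ^ n) hx, pow_add]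
  congr 1
  have h := Nat.ModEq.mul_left (a ^ n) ha
  rwa [mul_one] at h

theorem stmt_9_general (k i : ℕ) :
    31 ∣ 1 + ∑ j ∈ Finset.range (94 + 124 * i + 1), 2 ^ (2 ^ (4 * k + j)) := by
  set f : ℕ → ZMod 31 := fun n => 2 ^ 2 ^ n
  have hf : Function.Periodic f 4 :=
    periodic_pow_pow_of_pow_eq_one (d := 5) (by decide) (by decide)
  have hshift : ∀ j, f (4 * k + j) = f j := fun j => by
    rw [add_comm, mul_comm]; exact hf.nsmul k j
  have hblock : ∑ j ∈ range 4, f j = 30 := by decide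
  have htail : ∑ j ∈ range 3, f j = 22 := by decide
  have h31 : (31 : ZMod 31) = 0 := rfl
  rw [← ZMod.natCast_eq_zero_iff]
  push_cast
  change 1 + ∑ j ∈ range (94 + 124 * i + 1), f (4 * k + j) = 0
  simp only [hshift]
  rw [show 94 + 124 * i + 1 = 4 * (23 + 31 * i) + 3 by ring, hf.sum_range_mul_add, hblock, htail,
    nsmul_eq_mul]
  push_cast
  linear_combination (23 + 30 * (i : ZMod 31)) * h31

theorem stmt_9 (k i : ℕ) (hk : 0 < k) :
    31 ∣ 1 + ∑ j ∈ Finset.range (94 + 124 * i + 1), 2 ^ (2 ^ (4 * k + j)) :=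
  stmt_9_general k i
end
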